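/- Let Φ = (G, φ) be a 2-connected non-geodetic T-gain graph. Then Φ is distance-incompatible if and only if there exists an unbalanced even cycle C in Φ containing two diametrically opposite vertices s and t of C such that d_G(s,t) equals half the length of C (i.e., s and t have no shorter connecting path in G). -/

import Mathlib

/-!
Among all pairs of shortest `s`-`t` walks with different gains, take one with `d(s, t)` minimal.
A common inner vertex `w` would cut both walks into shortest `s`-`w` and `w`-`t` walks, and one of
these two pairs would again differ in gain at a smaller distance. So the two walks meet only at
`s` and `t`, and together they form an even cycle of gain `φ(p) φ(q)⁻¹ ≠ 1` on which `s` and `t`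
are opposite. Conversely, the two halves of such a cycle are shortest `s`-`t` walks of different
gains.
-/

open Matrix
open scoped Classical

noncomputable section

namespace GG

variable {V : Type*}

/-- The gain of a walk: product of the gains of its oriented edges. -/
def walkGain {G : SimpleGraph V} (φ : V → V → ℂ) {u v : V} (p : G.Walk u v) : ℂ :=
  (p.darts.map (fun d => φ d.toProd.1 d.toProd.2)).prod

/-- `φ` is a `𝕋`-gain function on `G`: unit modulus on edges, inverse under reversal. -/
def IsGain (G : SimpleGraph V) (φ : V → V → ℂ) : Prop :=
  (∀ i j, G.Adj i j → ‖φ i j‖ = 1) ∧ (∀ i j, G.Adj i j → φ j i = (φ i j)⁻¹)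

/-- Adjacency matrix of a gain graph. -/
def gainAdj [Fintype V] [DecidableEq V] (G : SimpleGraph V) (φ : V → V → ℂ) :
    Matrix V V ℂ := fun i j => if G.Adj i j then φ i j else 0

/-- A gain graph is balanced if every cycle has gain 1. -/
def GBalanced (G : SimpleGraph V) (φ : V → V → ℂ) : Prop :=
  ∀ (u : V) (c : G.Walk u u), c.IsCycle → walkGain φ c = 1

/-- All shortest paths between any pair of vertices have the same gain. -/
def DistCompatible (G : SimpleGraph V) (φ : V → V → ℂ) : Prop :=
  ∀ (s t : V) (p q : G.Walk s t), p.length = G.dist s t → q.length = G.dist s t →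
    walkGain φ p = walkGain φ q

/-- The set of gains of shortest `s`-`t` paths. -/
def shortestGains (G : SimpleGraph V) (φ : V → V → ℂ) (s t : V) : Set ℂ :=
  {z | ∃ p : G.Walk s t, p.length = G.dist s t ∧ walkGain φ p = z}

/-- The element of `S` maximizing the real part, ties broken by maximal imaginary part
(correct for finite nonempty sets of gains). -/
def lexMaxGain (S : Set ℂ) : ℂ :=
  ⟨sSup (Complex.re '' S), sSup (Complex.im '' {z ∈ S | z.re = sSup (Complex.re '' S)})⟩

/-- The element of `S` minimizing the real part, ties broken by minimal imaginary part. -/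
def lexMinGain (S : Set ℂ) : ℂ :=
  ⟨sInf (Complex.re '' S), sInf (Complex.im '' {z ∈ S | z.re = sInf (Complex.re '' S)})⟩

/-- The maximum gain distance matrix `D^max_<(Φ)` with respect to a strict order `lt`. -/
def Dmax [Fintype V] [DecidableEq V] (G : SimpleGraph V) (φ : V → V → ℂ)
    (lt : V → V → Prop) : Matrix V V ℂ := fun s t =>
  if lt s t then lexMaxGain (shortestGains G φ s t) * (G.dist s t : ℂ)
  else if lt t s then (starRingEnd ℂ) (lexMaxGain (shortestGains G φ t s)) * (G.dist s t : ℂ)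
  else 0

/-- The minimum gain distance matrix `D^min_<(Φ)` with respect to a strict order `lt`. -/
def Dmin [Fintype V] [DecidableEq V] (G : SimpleGraph V) (φ : V → V → ℂ)
    (lt : V → V → Prop) : Matrix V V ℂ := fun s t =>
  if lt s t then lexMinGain (shortestGains G φ s t) * (G.dist s t : ℂ)
  else if lt t s then (starRingEnd ℂ) (lexMinGain (shortestGains G φ t s)) * (G.dist s t : ℂ)
  else 0

/-- Vertex order independence: the gain distance matrices agree for the standard order
and its reverse. -/
def OrderIndependent [Fintype V] [DecidableEq V] [LinearOrder V] (G : SimpleGraph V)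
    (φ : V → V → ℂ) : Prop :=
  Dmax G φ (· < ·) = Dmax G φ (fun a b => b < a) ∧
  Dmin G φ (· < ·) = Dmin G φ (fun a b => b < a)

/-- The largest (real) eigenvalue of a matrix. -/
def maxEig [Fintype V] [DecidableEq V] (A : Matrix V V ℂ) : ℝ :=
  sSup {r : ℝ | (r : ℂ) ∈ spectrum ℂ A}

/-- The spectral radius of a matrix. -/
def specRad [Fintype V] [DecidableEq V] (A : Matrix V V ℂ) : ℝ :=
  sSup {r : ℝ | ∃ z ∈ spectrum ℂ A, ‖z‖ = r}

/-- The distance matrix of the underlying graph, as a complex matrix. -/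
def distMatrix [Fintype V] [DecidableEq V] (G : SimpleGraph V) : Matrix V V ℂ :=
  fun i j => (G.dist i j : ℂ)

/-- Weighted gain adjacency matrix `A(Φ_w)`. -/
def wGainAdj [Fintype V] [DecidableEq V] (G : SimpleGraph V) (φ : V → V → ℂ)
    (w : V → V → ℝ) : Matrix V V ℂ := fun i j => if G.Adj i j then φ i j * (w i j : ℂ) else 0

/-- Weighted adjacency matrix `A(G_w)` of the underlying weighted graph. -/
def wAdj [Fintype V] [DecidableEq V] (G : SimpleGraph V) (w : V → V → ℝ) :
    Matrix V V ℂ := fun i j => if G.Adj i j then (w i j : ℂ) else 0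


/-- `G` is 2-connected: connected, at least 3 vertices, and no cut vertex. -/
def TwoConnected {V : Type*} [Fintype V] (G : SimpleGraph V) : Prop :=
  G.Connected ∧ 3 ≤ Fintype.card V ∧
    ∀ v : V, (G.induce ({v}ᶜ : Set V)).Connected

open SimpleGraph

variable {G : SimpleGraph V} {φ : V → V → ℂ} {u v w : V}

lemma walkGain_append (φ : V → V → ℂ) (p : G.Walk u v) (q : G.Walk v w) :
    walkGain φ (p.append q) = walkGain φ p * walkGain φ q := by
  simp [walkGain, Walk.darts_append]

lemma walkGain_reverse (hφ : IsGain G φ) (p : G.Walk u v) :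
    walkGain φ p.reverse = (walkGain φ p)⁻¹ := by
  have hsymm : ∀ d ∈ p.darts, φ d.toProd.2 d.toProd.1 = (φ d.toProd.1 d.toProd.2)⁻¹ :=
    fun d _ => hφ.2 _ _ d.adj
  simp only [walkGain, Walk.darts_reverse, List.map_reverse, List.prod_reverse, List.map_map,
    List.prod_inv]
  exact congrArg List.prod (List.map_congr_left hsymm)

lemma walkGain_ne_zero (hφ : IsGain G φ) (p : G.Walk u v) : walkGain φ p ≠ 0 := by
  refine List.prod_ne_zero fun h0 => ?_
  obtain ⟨d, -, hd⟩ := List.mem_map.mp h0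
  simpa [hd] using hφ.1 _ _ d.adj

lemma walkGain_append_reverse_eq_one_iff (hφ : IsGain G φ) (p q : G.Walk u v) :
    walkGain φ (p.append q.reverse) = 1 ↔ walkGain φ p = walkGain φ q := by
  rw [walkGain_append, walkGain_reverse hφ, mul_inv_eq_one₀ (walkGain_ne_zero hφ q)]

lemma length_takeUntil_dropUntil_eq_dist [DecidableEq V] {p : G.Walk u v}
    (hp : p.length = G.dist u v) (hw : w ∈ p.support) :
    (p.takeUntil w hw).length = G.dist u w ∧ (p.dropUntil w hw).length = G.dist w v := by
  have hlen := congrArg Walk.length (p.take_spec hw)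
  rw [Walk.length_append] at hlen
  have := (p.takeUntil w hw).reachable.dist_triangle_left v
  have := dist_le (p.takeUntil w hw)
  have := dist_le (p.dropUntil w hw)
  omega

lemma start_notMem_support_tail {p : G.Walk u v} (hp : p.IsPath) : u ∉ p.support.tail := by
  have hnodup := hp.support_nodup
  rw [← p.cons_tail_support, List.nodup_cons] at hnodup
  exact hnodup.1

lemma isCycle_append_reverse {p q : G.Walk u v} (hp : p.IsPath) (hq : q.IsPath) (hpq : p ≠ q)
    (hmeet : ∀ w ∈ p.support, w ∈ q.support → w = u ∨ w = v) :
    (p.append q.reverse).IsCycle := by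
  refine hp.isCycle_append hq.reverse (fun x hxp hxq => ?_) ?_
  · have hu : x ≠ u := by
      rintro rfl
      exact start_notMem_support_tail hp hxp
    have hv : x ≠ v := by
      rintro rfl
      exact start_notMem_support_tail hq.reverse hxq
    have hxq' : x ∈ q.support := by
      simpa using List.mem_of_mem_tail hxq
    rcases hmeet x (List.mem_of_mem_tail hxp) hxq' with h | h
    exacts [hu h, hv h]
  · by_contra! hle
    exact hpq (Walk.eq_of_length_le_one hle.1 (by simpa using hle.2))

lemma exists_shortest_walks_walkGain_ne_meeting_only_at_ends {s t : V} (p q : G.Walk s t)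
    (hp : p.length = G.dist s t) (hq : q.length = G.dist s t)
    (hne : walkGain φ p ≠ walkGain φ q) :
    ∃ (a b : V) (p' q' : G.Walk a b), p'.length = G.dist a b ∧ q'.length = G.dist a b ∧
      walkGain φ p' ≠ walkGain φ q' ∧ ∀ w ∈ p'.support, w ∈ q'.support → w = a ∨ w = b := by
  induction hn : G.dist s t using Nat.strong_induction_on generalizing s t with
  | _ n ih =>
  by_cases hmeet : ∀ w ∈ p.support, w ∈ q.support → w = s ∨ w = t
  · exact ⟨s, t, p, q, hp, hq, hne, hmeet⟩
  push Not at hmeet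
  obtain ⟨w, hwp, hwq, hws, hwt⟩ := hmeet
  obtain ⟨hp₁, hp₂⟩ := length_takeUntil_dropUntil_eq_dist hp hwp
  obtain ⟨hq₁, hq₂⟩ := length_takeUntil_dropUntil_eq_dist hq hwq
  have hsplit : ∀ r : G.Walk s t, ∀ hr : w ∈ r.support,
      walkGain φ r = walkGain φ (r.takeUntil w hr) * walkGain φ (r.dropUntil w hr) := by
    intro r hr
    conv_lhs => rw [← r.take_spec hr]
    exact walkGain_append φ _ _
  by_cases hgain : walkGain φ (p.takeUntil w hwp) = walkGain φ (q.takeUntil w hwq)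
  · refine ih (G.dist w t) ?_ _ _ hp₂ hq₂ ?_ rfl
    · have := Walk.length_dropUntil_lt_length hwp hws
      omega
    · intro h
      exact hne (by rw [hsplit p hwp, hsplit q hwq, hgain, h])
  · refine ih (G.dist s w) ?_ _ _ hp₁ hq₁ hgain rfl
    have := Walk.length_takeUntil_lt_length hwp hwt
    omega

theorem distIncompatible_iff_unbalanced_even_cycle_general {V : Type*}
    (G : SimpleGraph V) (φ : V → V → ℂ) (hφ : IsGain G φ) :
    (¬ DistCompatible G φ) ↔
      ∃ (s t : V) (p q : G.Walk s t),
        (p.append q.reverse).IsCycle ∧ p.length = q.length ∧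
        walkGain φ (p.append q.reverse) ≠ 1 ∧ G.dist s t = p.length := by
  constructor
  · intro hinc
    obtain ⟨s, t, p, q, hp, hq, hne⟩ : ∃ (s t : V) (p q : G.Walk s t), p.length = G.dist s t ∧
        q.length = G.dist s t ∧ walkGain φ p ≠ walkGain φ q := by
      simpa [DistCompatible] using hinc
    obtain ⟨s, t, p, q, hp, hq, hne, hmeet⟩ :=
      exists_shortest_walks_walkGain_ne_meeting_only_at_ends p q hp hq hne
    have hcycle : (p.append q.reverse).IsCycle :=
      isCycle_append_reverse (p.isPath_of_length_eq_dist hp) (q.isPath_of_length_eq_dist hq)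
        (ne_of_apply_ne (walkGain φ) hne) hmeet
    exact ⟨s, t, p, q, hcycle, hp.trans hq.symm,
      (walkGain_append_reverse_eq_one_iff hφ p q).not.mpr hne, hp.symm⟩
  · rintro ⟨s, t, p, q, -, hlen, hunbal, hdist⟩ hcomp
    exact hunbal ((walkGain_append_reverse_eq_one_iff hφ p q).mpr
      (hcomp s t p q hdist.symm (hlen ▸ hdist.symm)))

/-- a 2-connected non-geodetic gain graph is distance-incompatible iff it has
an unbalanced even cycle with two diametrically opposite vertices `s`, `t` such that
`d_G(s,t)` is half the cycle length (no shorter connecting path exists). -/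
theorem distIncompatible_iff_unbalanced_even_cycle {V : Type*} [Fintype V] [DecidableEq V]
    (G : SimpleGraph V) (φ : V → V → ℂ) (hφ : IsGain G φ) (h2 : TwoConnected G)
    (hngeo : ∃ (s t : V) (p q : G.Walk s t),
      p.length = G.dist s t ∧ q.length = G.dist s t ∧ p ≠ q) :
    (¬ DistCompatible G φ) ↔
      ∃ (s t : V) (p q : G.Walk s t),
        (p.append q.reverse).IsCycle ∧ p.length = q.length ∧
        walkGain φ (p.append q.reverse) ≠ 1 ∧ G.dist s t = p.length :=
  distIncompatible_iff_unbalanced_even_cycle_general G φ hφ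

end GG
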